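/- Let (P, Q, R) be a triple of pairwise disjoint sets with P ∪ Q ∪ R = {1, …, N} and |Q| ≥ 1, and write |T[P]| = ∏_{m ∈ P} K_m · ∏_{m ∉ P} L_m. Then the optimal partial TTM-tree cost opt(P, Q, R) satisfies the following recurrence: (a) if |Q| = 1 and R = ∅ then opt(P, Q, R) = 0; (b) otherwise, opt(P, Q, R) equals the minimum of the following available options: the reuse option, available when R ≠ ∅, which equals min over n ∈ R of K_n · |T[P]| + opt(P ∪ {n}, Q, R ∖ {n}); and the split option, available when |Q| ≥ 2, which equals min over partitions Q = Q₁ ⊎ Q₂ with Q₁, Q₂ ≠ ∅ of opt(P, Q₁, R) + opt(P, Q₂, R). -/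

import Mathlib

/-- A finite rooted labeled tree, the combinatorial skeleton of a TTM-tree for
an `N`-dimensional tensor.  Every node stores its parent (the root being its
own parent) and every node reaches the root by iterating `parent`.  The label
of a non-root node is a mode in `{1, …, N}` (for a leaf, it designates the new
factor matrix computed at that leaf); the root's label is ignored. -/
structure TTMTree (N : ℕ) where
  V : Type
  fintypeV : Fintype V
  decEqV : DecidableEq V
  root : V
  parent : V → V
  parent_root : parent root = root
  reaches_root : ∀ v : V, ∃ k : ℕ, parent^[k] v = root
  label : V → Fin N

attribute [instance] TTMTree.fintypeV TTMTree.decEqV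

namespace TTMTree

variable {N : ℕ}

/-- A leaf: a node other than the root having no children. -/
def IsLeaf (H : TTMTree N) (v : H.V) : Prop :=
  v ≠ H.root ∧ ∀ u : H.V, u ≠ v → H.parent u ≠ v

/-- An internal node: a node that is neither the root nor a leaf. -/
def IsInternal (H : TTMTree N) (v : H.V) : Prop :=
  v ≠ H.root ∧ ¬ H.IsLeaf v

/-- `u` lies on the path from the root to `v`, i.e. `u` is an ancestor of `v`
(inclusively: `v` is an ancestor of itself). -/
def IsAncestor (H : TTMTree N) (u v : H.V) : Prop :=
  ∃ k : ℕ, H.parent^[k] v = u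


end TTMTree

namespace TTMTree

variable {N : ℕ}

/-- The depth of a node: the least `k` with `parent^[k] v = root`. -/
noncomputable def depth (H : TTMTree N) (v : H.V) : ℕ :=
  @Nat.find (fun k => H.parent^[k] v = H.root) (Classical.decPred _)
    (H.reaches_root v)

/-- Fuel-based helper for the cardinality function with root cardinality `c₀`. -/
noncomputable def outAux (c₀ : ℚ) (L K : Fin N → ℕ) (H : TTMTree N) :
    ℕ → H.V → ℚ
  | 0, _ => c₀
  | k + 1, v =>
      if v = H.root then c₀
      else ((K (H.label v) : ℚ) / (L (H.label v) : ℚ)) *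
        outAux c₀ L K H k (H.parent v)

/-- The cardinality `Out(v)` of the tensor output at node `v`, when the root
outputs a tensor of cardinality `c₀`:  `Out(root) = c₀` and
`Out(v) = (K m / L m) · Out(parent v)` for a non-root node `v` labeled `m`. -/
noncomputable def out (c₀ : ℚ) (L K : Fin N → ℕ) (H : TTMTree N) (v : H.V) :
    ℚ :=
  H.outAux c₀ L K (H.depth v) v

/-- The set of internal nodes of `H`. -/
noncomputable def internals (H : TTMTree N) : Finset H.V :=
  letI := Classical.decPred H.IsInternal
  Finset.univ.filter H.IsInternal

/-- The cost of the tree when the root tensor has cardinality `c₀`: each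
internal node labeled `m` costs `K m · In(u)` with `In(u) = Out(parent u)`,
summed over all internal nodes. -/
noncomputable def cost (c₀ : ℚ) (L K : Fin N → ℕ) (H : TTMTree N) : ℚ :=
  ∑ v ∈ H.internals, (K (H.label v) : ℚ) * H.out c₀ L K (H.parent v)

end TTMTree

/-- `|T[P]|`: the cardinality of the tensor obtained from the input tensor by
multiplying along all modes of `P`, namely `∏_{m ∈ P} K m · ∏_{m ∉ P} L m`. -/
def rootCard {N : ℕ} (L K : Fin N → ℕ) (P : Finset (Fin N)) : ℚ :=
  (∏ m ∈ P, (K m : ℚ)) * ∏ m ∈ Pᶜ, (L m : ℚ)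

/-- `H` is a partial TTM-tree for the pair `(P, Q)` (the set `R` of reusable
modes plays no role in the definition): (ii) there are exactly `|Q|` leaves,
each labeled by a distinct mode of `Q`; (iii) every internal node is labeled
by a mode outside `P`; (iv) for every leaf labeled `n`, the path from the root
to the leaf contains exactly `N - |P| - 1` internal nodes, and all the modes
outside `P ∪ {n}` appear among their labels. -/
def PartialValid {N : ℕ} (P Q : Finset (Fin N)) (H : TTMTree N) : Prop :=
  (∀ n ∈ Q, ∃! v : H.V, H.IsLeaf v ∧ H.label v = n) ∧
  (∀ v : H.V, H.IsLeaf v → H.label v ∈ Q) ∧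
  (∀ v : H.V, H.IsInternal v → H.label v ∉ P) ∧
  (∀ v : H.V, H.IsLeaf v →
    ∃ A : Finset H.V,
      (∀ u : H.V, u ∈ A ↔ (H.IsAncestor u v ∧ H.IsInternal u)) ∧
      A.card = N - P.card - 1 ∧
      (∀ m : Fin N, m ∉ P → m ≠ H.label v → ∃ u ∈ A, H.label u = m))

/-- The cost of a partial TTM-tree for `(P, Q)`: its root outputs the tensor
`T[P]` of cardinality `∏_{m ∈ P} K m · ∏_{m ∉ P} L m`. -/
noncomputable def pcost {N : ℕ} (L K : Fin N → ℕ) (P : Finset (Fin N))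
    (H : TTMTree N) : ℚ :=
  TTMTree.cost (rootCard L K P) L K H

/-!
Take an optimal tree for `(P, Q)` and look at the children of its root. If there is a single
child `c` and it is a leaf, the path condition at `c` forces `P ∪ {label c}` to be everything, so
`Q = {label c}` and `R = ∅`. If `c` is internal, its label `n` is in `R`, and the subtree below `c`
is a partial TTM-tree for `(P ∪ {n}, Q)`: it starts from a tensor of cardinality
`(K n / L n) |T[P]| = |T[P ∪ {n}]|`, while `c` itself costs `K n |T[P]|`. This is the reuse
option. If the root has at least two children, the branch through one of them and the remaining
branches are partial TTM-trees for a partition of `Q`, and their costs add up: the split option.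
Conversely, putting a node labelled `n` above the root of a tree, or gluing two trees at their
roots, realises every option, so `opt` is at most each of them. Part (a) holds because a root with
a single leaf is a valid tree of cost `0`.

Each of these four operations comes with an embedding of trees commuting with `parent` and
`label` (`TTMTree.IsEmbedding`); such an embedding preserves leaves, internal nodes, paths to the
root and the cardinalities `Out`, which transfers validity and cost between the two trees.
-/

theorem exists_iterate_eq_of_rank_lt {α : Type*} (g : α → α) (a : α) (μ : α → ℕ)
    (hμ : ∀ x, x ≠ a → μ (g x) < μ x) (x : α) : ∃ k, g^[k] x = a := by
  induction hx : μ x using Nat.strong_induction_on generalizing x with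
  | _ n ih =>
    by_cases h : x = a
    · exact ⟨0, h⟩
    · obtain ⟨k, hk⟩ := ih _ (hx ▸ hμ x h) (g x) rfl
      exact ⟨k + 1, hk⟩

theorem Set.BijOn.union_of_disjoint {α β : Type*} {f : α → β} {s₁ s₂ : Set α} {t₁ t₂ : Set β}
    (h₁ : Set.BijOn f s₁ t₁) (h₂ : Set.BijOn f s₂ t₂) (ht : Disjoint t₁ t₂) :
    Set.BijOn f (s₁ ∪ s₂) (t₁ ∪ t₂) := by
  refine h₁.union h₂ fun x hx y hy hxy => ?_
  rcases hx with hx | hx <;> rcases hy with hy | hy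
  · exact h₁.injOn hx hy hxy
  · exact (Set.disjoint_left.mp ht (h₁.mapsTo hx) (hxy ▸ h₂.mapsTo hy)).elim
  · exact (Set.disjoint_left.mp ht (hxy ▸ h₁.mapsTo hy) (h₂.mapsTo hx)).elim
  · exact h₂.injOn hx hy hxy

theorem Set.bijOn_setOf_iff {α β : Type*} {f : α → β} {p : α → Prop} {t : Set β} :
    Set.BijOn f {x | p x} t ↔ (∀ y ∈ t, ∃! x, p x ∧ f x = y) ∧ ∀ x, p x → f x ∈ t := by
  refine ⟨fun h => ⟨fun y hy => ?_, h.mapsTo⟩, fun h => ⟨h.2, fun x hx x' hx' he => ?_, ?_⟩⟩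
  · obtain ⟨x, hx, rfl⟩ := h.surjOn hy
    exact ⟨x, ⟨hx, rfl⟩, fun x' hx' => h.injOn hx'.1 hx hx'.2⟩
  · exact (h.1 _ (h.2 x hx)).unique ⟨hx, rfl⟩ ⟨hx', he.symm⟩
  · exact fun y hy => (h.1 y hy).exists

theorem Finset.bijOn_coe_iff {α β : Type*} [DecidableEq β] {f : α → β} {A : Finset α}
    {C : Finset β} : Set.BijOn f A C ↔ A.card = C.card ∧ C ⊆ A.image f := by
  refine ⟨fun h => ⟨Finset.card_nbij f h.mapsTo h.injOn h.surjOn, fun m hm => ?_⟩,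
    fun ⟨hcard, hsub⟩ => ?_⟩
  · obtain ⟨a, ha, rfl⟩ := h.surjOn hm
    exact Finset.mem_image_of_mem f ha
  · have himage : A.image f = C :=
      (Finset.eq_of_subset_of_card_le hsub (hcard ▸ Finset.card_image_le)).symm
    rw [← himage, Finset.coe_image]
    exact (Finset.card_image_iff.mp (himage ▸ hcard.symm)).bijOn_image

namespace TTMTree

section Basic

variable {N : ℕ} (H : TTMTree N)

theorem iterate_depth (v : H.V) : H.parent^[H.depth v] v = H.root :=
  @Nat.find_spec _ (Classical.decPred _) (H.reaches_root v)

theorem iterate_ne_root {v : H.V} {k : ℕ} (hk : k < H.depth v) : H.parent^[k] v ≠ H.root :=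
  @Nat.find_min _ (Classical.decPred _) (H.reaches_root v) _ hk

theorem iterate_parent_root (k : ℕ) : H.parent^[k] H.root = H.root :=
  Function.iterate_fixed H.parent_root k

theorem depth_eq_zero_iff {v : H.V} : H.depth v = 0 ↔ v = H.root :=
  ⟨fun h => by simpa [h] using H.iterate_depth v,
    fun h => Nat.eq_zero_of_not_pos fun hpos => H.iterate_ne_root hpos h⟩

@[simp] theorem depth_root : H.depth H.root = 0 := H.depth_eq_zero_iff.mpr rfl

theorem depth_parent {v : H.V} (hv : v ≠ H.root) : H.depth v = H.depth (H.parent v) + 1 :=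
  @Nat.find_comp_succ _ (Classical.decPred _) (H.reaches_root v)
    ⟨_, H.iterate_depth (H.parent v)⟩ hv

theorem iterate_of_depth_le {v : H.V} {k : ℕ} (hk : H.depth v ≤ k) : H.parent^[k] v = H.root := by
  obtain ⟨j, rfl⟩ := Nat.exists_eq_add_of_le hk
  rw [Nat.add_comm, Function.iterate_add_apply, H.iterate_depth, H.iterate_parent_root]

theorem depth_iterate {v : H.V} {k : ℕ} (hk : k ≤ H.depth v) :
    H.depth (H.parent^[k] v) = H.depth v - k := by
  induction k with
  | zero => rfl
  | succ k ih =>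
    have := H.depth_parent (H.iterate_ne_root (v := v) hk)
    rw [Function.iterate_succ_apply']
    omega

theorem isAncestor_iff {u v : H.V} :
    H.IsAncestor u v ↔ ∃ k ≤ H.depth v, H.parent^[k] v = u := by
  refine ⟨fun ⟨k, hk⟩ => ?_, fun ⟨k, _, hk⟩ => ⟨k, hk⟩⟩
  rcases le_total k (H.depth v) with h | h
  · exact ⟨k, h, hk⟩
  · exact ⟨H.depth v, le_rfl, by rw [← hk, H.iterate_of_depth_le h, H.iterate_depth]⟩

theorem isAncestor_refl (v : H.V) : H.IsAncestor v v := ⟨0, rfl⟩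

theorem isAncestor_root (v : H.V) : H.IsAncestor H.root v := ⟨_, H.iterate_depth v⟩

theorem isAncestor_parent (v : H.V) : H.IsAncestor (H.parent v) v := ⟨1, rfl⟩

theorem IsAncestor.trans {H : TTMTree N} {u v w : H.V} (huv : H.IsAncestor u v)
    (hvw : H.IsAncestor v w) :
    H.IsAncestor u w := by
  obtain ⟨k, rfl⟩ := huv
  obtain ⟨j, rfl⟩ := hvw
  exact ⟨k + j, Function.iterate_add_apply _ _ _ _⟩

theorem eq_root_of_isAncestor_root {u : H.V} (h : H.IsAncestor u H.root) : u = H.root := by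
  obtain ⟨k, rfl⟩ := h
  exact H.iterate_parent_root k

theorem IsAncestor.iterate_depth_sub {H : TTMTree N} {u v : H.V} (h : H.IsAncestor u v) :
    H.parent^[H.depth v - H.depth u] v = u := by
  obtain ⟨k, hk, rfl⟩ := H.isAncestor_iff.mp h
  rw [H.depth_iterate hk, Nat.sub_sub_self hk]

theorem exists_isLeaf_of_isAncestor {v : H.V} (hv : v ≠ H.root) :
    ∃ w, H.IsLeaf w ∧ H.IsAncestor v w := by
  classical
  obtain ⟨w, hw, hmax⟩ := Finset.exists_max_image ({w | H.IsAncestor v w} : Finset H.V) H.depth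
    ⟨v, by simp [H.isAncestor_refl]⟩
  rw [Finset.mem_filter] at hw
  have hwr : w ≠ H.root := fun h => hv (H.eq_root_of_isAncestor_root (h ▸ hw.2))
  refine ⟨w, ⟨hwr, fun u _ hu => ?_⟩, hw.2⟩
  have hur : u ≠ H.root := fun h => hwr (by rw [← hu, h, H.parent_root])
  have := hmax u (by simpa using hw.2.trans (hu ▸ H.isAncestor_parent u))
  have := H.depth_parent hur
  rw [hu] at this
  omega

theorem exists_parent_eq_root_isAncestor {v : H.V} (hv : v ≠ H.root) :
    ∃ c, H.parent c = H.root ∧ c ≠ H.root ∧ H.IsAncestor c v := by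
  have hd : H.depth v ≠ 0 := mt H.depth_eq_zero_iff.mp hv
  refine ⟨H.parent^[H.depth v - 1] v, ?_, H.iterate_ne_root (by omega), ⟨_, rfl⟩⟩
  rw [← Function.iterate_succ_apply' H.parent, Nat.succ_eq_add_one, Nat.sub_add_cancel (by omega),
    H.iterate_depth]

theorem mem_internals {v : H.V} : v ∈ H.internals ↔ H.IsInternal v := by
  classical
  simp [internals]

theorem out_root (c₀ : ℚ) (L K : Fin N → ℕ) : H.out c₀ L K H.root = c₀ := by
  rw [out, H.depth_root]
  rfl

theorem out_of_ne_root (c₀ : ℚ) (L K : Fin N → ℕ) {v : H.V} (hv : v ≠ H.root) :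
    H.out c₀ L K v = (K (H.label v) / L (H.label v) : ℚ) * H.out c₀ L K (H.parent v) := by
  rw [out, out, H.depth_parent hv, outAux, if_neg hv]

theorem out_nonneg {c₀ : ℚ} (hc₀ : 0 ≤ c₀) (L K : Fin N → ℕ) (v : H.V) : 0 ≤ H.out c₀ L K v := by
  induction hd : H.depth v generalizing v with
  | zero => rw [H.depth_eq_zero_iff.mp hd, H.out_root]; exact hc₀
  | succ d ih =>
    have hv : v ≠ H.root := fun h => by simp [h] at hd
    rw [H.out_of_ne_root _ _ _ hv]
    exact mul_nonneg (by positivity) (ih _ (by have := H.depth_parent hv; omega))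

theorem cost_nonneg {c₀ : ℚ} (hc₀ : 0 ≤ c₀) (L K : Fin N → ℕ) : 0 ≤ H.cost c₀ L K :=
  Finset.sum_nonneg fun _ _ => mul_nonneg (Nat.cast_nonneg _) (H.out_nonneg hc₀ L K _)

theorem IsAncestor.isAncestor_parent {H : TTMTree N} {u v : H.V} (h : H.IsAncestor u v)
    (hne : u ≠ v) : H.IsAncestor u (H.parent v) := by
  obtain ⟨_ | k, hk⟩ := h
  · exact (hne hk.symm).elim
  · exact ⟨k, hk⟩

theorem eq_of_isAncestor_of_depth_eq {u u' w : H.V} (h : H.IsAncestor u w)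
    (h' : H.IsAncestor u' w) (hd : H.depth u = H.depth u') : u = u' := by
  rw [← h.iterate_depth_sub, ← h'.iterate_depth_sub, hd]

theorem depth_eq_one {c : H.V} (hc : H.parent c = H.root) (hcr : c ≠ H.root) : H.depth c = 1 := by
  rw [H.depth_parent hcr, hc, depth_root]

def internalAncestors (v : H.V) : Set H.V := {u | H.IsAncestor u v ∧ H.IsInternal u}

theorem internalAncestors_root : H.internalAncestors H.root = ∅ :=
  Set.eq_empty_of_forall_notMem fun _ ⟨hu, hi⟩ => hi.1 (H.eq_root_of_isAncestor_root hu)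

theorem internalAncestors_subset_of_parent_eq_root {c : H.V} (hc : H.parent c = H.root) :
    H.internalAncestors c ⊆ {c} := by
  rintro _ ⟨⟨_ | k, rfl⟩, hi⟩
  · rfl
  · exact absurd (by rw [Function.iterate_succ_apply, hc, H.iterate_parent_root]) hi.1

theorem internalAncestors_of_parent_eq_root {c : H.V} (hc : H.parent c = H.root)
    (hci : H.IsInternal c) : H.internalAncestors c = {c} :=
  (H.internalAncestors_subset_of_parent_eq_root hc).antisymm
    (Set.singleton_subset_iff.mpr ⟨H.isAncestor_refl c, hci⟩)

noncomputable def leafLabels : Finset (Fin N) :=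
  letI := Classical.decPred H.IsLeaf
  (Finset.univ.filter H.IsLeaf).image H.label

theorem mem_leafLabels {m : Fin N} : m ∈ H.leafLabels ↔ ∃ v, H.IsLeaf v ∧ H.label v = m := by
  classical
  simp [leafLabels]

theorem coe_leafLabels : (H.leafLabels : Set (Fin N)) = H.label '' {v | H.IsLeaf v} :=
  Set.ext fun _ => H.mem_leafLabels

end Basic

theorem exists_finset_internalAncestors_iff {N : ℕ} {P : Finset (Fin N)} {H : TTMTree N}
    {v : H.V} (hvP : H.label v ∉ P) :
    (∃ A : Finset H.V, (∀ u, u ∈ A ↔ H.IsAncestor u v ∧ H.IsInternal u) ∧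
        A.card = N - P.card - 1 ∧ ∀ m, m ∉ P → m ≠ H.label v → ∃ u ∈ A, H.label u = m) ↔
      Set.BijOn H.label (H.internalAncestors v) (insert (H.label v) ↑P)ᶜ := by
  classical
  have htarget : (insert (H.label v) (P : Set (Fin N)))ᶜ = ↑(insert (H.label v) P)ᶜ := by
    push_cast
    rfl
  have hcard : ((insert (H.label v) P)ᶜ).card = N - P.card - 1 := by
    rw [Finset.card_compl, Finset.card_insert_of_notMem hvP, Fintype.card_fin]
    omega
  have hcover (A : Finset H.V) : (∀ m, m ∉ P → m ≠ H.label v → ∃ u ∈ A, H.label u = m) ↔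
      (insert (H.label v) P)ᶜ ⊆ A.image H.label := by
    simp only [Finset.subset_iff, Finset.mem_compl, Finset.mem_insert, not_or, Finset.mem_image]
    exact ⟨fun h m hm => h m hm.2 hm.1, fun h m hmP hmv => h ⟨hmv, hmP⟩⟩
  rw [htarget, ← hcard]
  constructor
  · rintro ⟨A, hA, hAcard, hAcover⟩
    rw [show H.internalAncestors v = A from (Set.ext hA).symm]
    exact Finset.bijOn_coe_iff.mpr ⟨hAcard, (hcover A).mp hAcover⟩
  · intro h
    rw [← Set.coe_toFinset (H.internalAncestors v), Finset.bijOn_coe_iff] at h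
    exact ⟨_, fun u => Set.mem_toFinset, h.1, (hcover _).mpr h.2⟩

end TTMTree

open TTMTree in
/-- Condition (iii) of `PartialValid` follows from (iv), and (iv) says that the labels along the
path to a leaf enumerate the modes outside `P` other than the leaf's own, each exactly once. -/
theorem partialValid_iff {N : ℕ} {P Q : Finset (Fin N)} (hPQ : Disjoint P Q) (H : TTMTree N) :
    PartialValid P Q H ↔ Set.BijOn H.label {v | H.IsLeaf v} Q ∧
      ∀ v, H.IsLeaf v → Set.BijOn H.label (H.internalAncestors v) (insert (H.label v) ↑P)ᶜ := by
  have hvP {v : H.V} (hv : H.label v ∈ Q) : H.label v ∉ P := Finset.disjoint_right.mp hPQ hv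
  rw [Set.bijOn_setOf_iff]
  refine ⟨fun ⟨hi, hii, _, hiv⟩ => ⟨⟨hi, hii⟩, fun v hv => ?_⟩,
    fun ⟨⟨hi, hii⟩, hpath⟩ => ⟨hi, hii, fun u hu => ?_, fun v hv => ?_⟩⟩
  · exact (exists_finset_internalAncestors_iff (hvP (hii v hv))).mp (hiv v hv)
  · obtain ⟨w, hw, huw⟩ := H.exists_isLeaf_of_isAncestor hu.1
    have := (hpath w hw).mapsTo ⟨huw, hu⟩
    simp only [Set.mem_compl_iff, Set.mem_insert_iff, Finset.mem_coe, not_or] at this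
    exact this.2
  · exact (exists_finset_internalAncestors_iff (hvP (hii v hv))).mpr (hpath v hv)

theorem PartialValid.exists_isLeaf {N : ℕ} {P Q : Finset (Fin N)} {H : TTMTree N}
    (h : PartialValid P Q H) (hQ : Q.Nonempty) : ∃ v, H.IsLeaf v :=
  let ⟨_, hq⟩ := hQ
  let ⟨v, ⟨hv, _⟩, _⟩ := h.1 _ hq
  ⟨v, hv⟩

theorem PartialValid.label_notMem {N : ℕ} {P Q : Finset (Fin N)} {H : TTMTree N}
    (h : PartialValid P Q H) {u : H.V} (hu : H.IsInternal u) : H.label u ∉ P :=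
  h.2.2.1 u hu

theorem PartialValid.leafLabels_eq {N : ℕ} {P Q : Finset (Fin N)} {H : TTMTree N}
    (hPQ : Disjoint P Q) (h : PartialValid P Q H) : H.leafLabels = Q :=
  Finset.coe_injective <| by
    rw [TTMTree.coe_leafLabels]
    exact ((partialValid_iff hPQ H).mp h).1.image_eq

namespace TTMTree

variable {N : ℕ}

section Embedding

variable {H H₁ H₂ : TTMTree N}

/-- `f` identifies `H₁` with a union of branches of `H₂` hanging from the node `f H₁.root`. -/
structure IsEmbedding (f : H₁.V → H₂.V) : Prop where
  injective : Function.Injective f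
  parent_map : ∀ v, v ≠ H₁.root → H₂.parent (f v) = f (H₁.parent v)
  label_map : ∀ v, v ≠ H₁.root → H₂.label (f v) = H₁.label v
  exists_of_parent_eq : ∀ v x, v ≠ H₁.root → H₂.parent x = f v → ∃ u, f u = x

namespace IsEmbedding

variable {f : H₁.V → H₂.V} (hf : IsEmbedding f)
include hf

theorem map_ne_root {v : H₁.V} (hv : v ≠ H₁.root) : f v ≠ H₂.root := by
  intro h
  have hfix : H₁.parent v = v := hf.injective (by rw [← hf.parent_map v hv, h, H₂.parent_root])
  obtain ⟨k, hk⟩ := H₁.reaches_root v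
  exact hv (by rwa [Function.iterate_fixed hfix] at hk)

theorem iterate_parent_map {v : H₁.V} {k : ℕ} (hk : k ≤ H₁.depth v) :
    H₂.parent^[k] (f v) = f (H₁.parent^[k] v) := by
  induction k with
  | zero => rfl
  | succ k ih =>
    rw [Function.iterate_succ_apply', ih (by omega), hf.parent_map _ (H₁.iterate_ne_root hk),
      ← Function.iterate_succ_apply' H₁.parent]

theorem depth_map (v : H₁.V) : H₂.depth (f v) = H₁.depth v + H₂.depth (f H₁.root) := by
  induction hd : H₁.depth v generalizing v with
  | zero => rw [H₁.depth_eq_zero_iff.mp hd, Nat.zero_add]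
  | succ d ih =>
    have hv : v ≠ H₁.root := fun h => by simp [h] at hd
    rw [H₂.depth_parent (hf.map_ne_root hv), hf.parent_map v hv,
      ih _ (by have := H₁.depth_parent hv; omega)]
    omega

theorem isAncestor_map_iff {u v : H₁.V} : H₂.IsAncestor (f u) (f v) ↔ H₁.IsAncestor u v := by
  refine ⟨fun h => ?_, fun h => ?_⟩
  · have := h.iterate_depth_sub
    rw [hf.depth_map v, hf.depth_map u, Nat.add_sub_add_right,
      hf.iterate_parent_map (Nat.sub_le _ _)] at this
    exact ⟨_, hf.injective this⟩
  · obtain ⟨k, hk, rfl⟩ := H₁.isAncestor_iff.mp h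
    exact ⟨k, hf.iterate_parent_map hk⟩

theorem isLeaf_map_iff {v : H₁.V} (hv : v ≠ H₁.root) : H₂.IsLeaf (f v) ↔ H₁.IsLeaf v := by
  refine ⟨fun ⟨_, h⟩ => ⟨hv, fun u huv hu => ?_⟩,
    fun ⟨_, h⟩ => ⟨hf.map_ne_root hv, fun x hxv hx => ?_⟩⟩
  · have hur : u ≠ H₁.root := by
      rintro rfl
      exact hv (hu.symm.trans H₁.parent_root)
    exact h (f u) (hf.injective.ne huv) (by rw [hf.parent_map u hur, hu])
  · obtain ⟨u, rfl⟩ := hf.exists_of_parent_eq v x hv hx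
    have hur : u ≠ H₁.root := by
      rintro rfl
      exact hv (H₁.eq_root_of_isAncestor_root
        (hf.isAncestor_map_iff.mp (hx ▸ H₂.isAncestor_parent _)))
    exact h u (fun h' => hxv (congrArg f h')) (hf.injective (by rw [← hf.parent_map u hur, hx]))

theorem isInternal_map_iff {v : H₁.V} (hv : v ≠ H₁.root) :
    H₂.IsInternal (f v) ↔ H₁.IsInternal v := by
  simp only [IsInternal, hf.isLeaf_map_iff hv, hv, hf.map_ne_root hv, ne_eq, not_false_eq_true,
    true_and]

theorem out_map (c₀ : ℚ) (L K : Fin N → ℕ) (v : H₁.V) :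
    H₂.out c₀ L K (f v) = H₁.out (H₂.out c₀ L K (f H₁.root)) L K v := by
  induction hd : H₁.depth v generalizing v with
  | zero => rw [H₁.depth_eq_zero_iff.mp hd, H₁.out_root]
  | succ d ih =>
    have hv : v ≠ H₁.root := fun h => by simp [h] at hd
    rw [H₂.out_of_ne_root _ _ _ (hf.map_ne_root hv), H₁.out_of_ne_root _ _ _ hv, hf.label_map v hv,
      hf.parent_map v hv, ih _ (by have := H₁.depth_parent hv; omega)]

theorem sum_image_internals (c₀ : ℚ) (L K : Fin N → ℕ) :
    ∑ x ∈ H₁.internals.image f, (K (H₂.label x) : ℚ) * H₂.out c₀ L K (H₂.parent x) =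
      H₁.cost (H₂.out c₀ L K (f H₁.root)) L K := by
  rw [Finset.sum_image fun _ _ _ _ h => hf.injective h]
  refine Finset.sum_congr rfl fun v hv => ?_
  have hvr := (H₁.mem_internals.mp hv).1
  rw [hf.label_map v hvr, hf.parent_map v hvr, hf.out_map]

theorem internalAncestors_map (v : H₁.V) :
    H₂.internalAncestors (f v) =
      f '' H₁.internalAncestors v ∪ H₂.internalAncestors (f H₁.root) := by
  ext x
  constructor
  · rintro ⟨⟨k, rfl⟩, hxi⟩
    rcases le_or_gt k (H₁.depth v) with h | h
    · rw [hf.iterate_parent_map h] at hxi ⊢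
      by_cases hr : H₁.parent^[k] v = H₁.root
      · rw [hr] at hxi ⊢
        exact Or.inr ⟨H₂.isAncestor_refl _, hxi⟩
      · exact Or.inl ⟨_, ⟨⟨k, rfl⟩, (hf.isInternal_map_iff hr).mp hxi⟩, rfl⟩
    · refine Or.inr ⟨⟨k - H₁.depth v, ?_⟩, hxi⟩
      rw [← H₁.iterate_depth v, ← hf.iterate_parent_map le_rfl, ← Function.iterate_add_apply,
        Nat.sub_add_cancel h.le]
  · rintro (⟨u, ⟨hu, hui⟩, rfl⟩ | ⟨hx, hxi⟩)
    · exact ⟨hf.isAncestor_map_iff.mpr hu, (hf.isInternal_map_iff hui.1).mpr hui⟩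
    · exact ⟨hx.trans (hf.isAncestor_map_iff.mpr (H₁.isAncestor_root v)), hxi⟩

theorem bijOn_label_image_iff {A : Set H₁.V} (hA : H₁.root ∉ A) {T : Set (Fin N)} :
    Set.BijOn H₂.label (f '' A) T ↔ Set.BijOn H₁.label A T := by
  rw [← Set.bijOn_comp_iff hf.injective.injOn]
  exact Set.EqOn.bijOn_iff fun v hv => hf.label_map v (ne_of_mem_of_not_mem hv hA)

theorem bijOn_internalAncestors_iff (hr : f H₁.root = H₂.root) (v : H₁.V) {T : Set (Fin N)} :
    Set.BijOn H₂.label (H₂.internalAncestors (f v)) T ↔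
      Set.BijOn H₁.label (H₁.internalAncestors v) T := by
  rw [hf.internalAncestors_map, hr, internalAncestors_root, Set.union_empty,
    hf.bijOn_label_image_iff fun h => h.2.1 rfl]

theorem setOf_isLeaf_eq_image (hri : ¬ H₂.IsLeaf (f H₁.root))
    (hcover : ∀ x, x ≠ H₂.root → ∃ v, f v = x) : {x | H₂.IsLeaf x} = f '' {v | H₁.IsLeaf v} := by
  ext x
  refine ⟨fun hx => ?_, fun ⟨v, hv, hx⟩ => hx ▸ (hf.isLeaf_map_iff hv.1).mpr hv⟩
  obtain ⟨v, rfl⟩ := hcover x hx.1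
  have hv : v ≠ H₁.root := fun h => hri (h ▸ hx)
  exact ⟨v, (hf.isLeaf_map_iff hv).mp hx, rfl⟩

theorem bijOn_internalAncestors_insert_iff (hr : H₂.parent (f H₁.root) = H₂.root)
    (hri : H₂.IsInternal (f H₁.root)) {n : Fin N} (hn : H₂.label (f H₁.root) = n)
    {P : Finset (Fin N)} {v : H₁.V} (hv : v ≠ H₁.root) (hnP : n ∉ insert (H₁.label v) P) :
    Set.BijOn H₁.label (H₁.internalAncestors v) (insert (H₁.label v) ↑(insert n P))ᶜ ↔
      Set.BijOn H₂.label (H₂.internalAncestors (f v)) (insert (H₂.label (f v)) ↑P)ᶜ := by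
  subst hn
  have htarget : (insert (H₂.label (f v)) (P : Set (Fin N)))ᶜ =
      insert (H₂.label (f H₁.root)) (insert (H₁.label v) ↑(insert (H₂.label (f H₁.root)) P))ᶜ := by
    ext m
    by_cases hm : m = H₂.label (f H₁.root)
    · subst hm
      simpa [hf.label_map v hv] using hnP
    · simp [hm, hf.label_map v hv]
  have hr_notMem : f H₁.root ∉ f '' H₁.internalAncestors v :=
    fun ⟨u, hu, he⟩ => hu.2.1 (hf.injective he)
  have hn_notMem : H₂.label (f H₁.root) ∉ (insert (H₁.label v)
      (insert (H₂.label (f H₁.root)) P : Finset (Fin N)) : Set (Fin N))ᶜ := by simp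
  rw [hf.internalAncestors_map, H₂.internalAncestors_of_parent_eq_root hr hri,
    Set.union_singleton, htarget, Set.BijOn.insert_iff hr_notMem hn_notMem,
    hf.bijOn_label_image_iff fun h => h.2.1 rfl]

theorem partialValid_insert_iff (hr : H₂.parent (f H₁.root) = H₂.root)
    (hri : H₂.IsInternal (f H₁.root)) (hcover : ∀ x, x ≠ H₂.root → ∃ v, f v = x)
    {n : Fin N} (hn : H₂.label (f H₁.root) = n) {P Q : Finset (Fin N)} (hnP : n ∉ P)
    (hPQ : Disjoint (insert n P) Q) :
    PartialValid (insert n P) Q H₁ ↔ PartialValid P Q H₂ := by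
  have hnQ : n ∉ Q := Finset.disjoint_left.mp hPQ (Finset.mem_insert_self n P)
  rw [partialValid_iff hPQ, partialValid_iff (hPQ.mono_left (Finset.subset_insert _ _)),
    hf.setOf_isLeaf_eq_image hri.2 hcover, hf.bijOn_label_image_iff fun h => h.1 rfl]
  refine and_congr_right fun hleaves => ?_
  have hpath {v : H₁.V} (hv : H₁.IsLeaf v) :=
    hf.bijOn_internalAncestors_insert_iff hr hri hn (P := P) hv.1 <| by
      simp only [Finset.mem_insert, not_or]
      exact ⟨fun h => hnQ (h ▸ hleaves.mapsTo hv), hnP⟩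
  refine ⟨fun h x hx => ?_, fun h v hv => (hpath hv).mpr (h _ ((hf.isLeaf_map_iff hv.1).mpr hv))⟩
  have hx' : x ∈ {x | H₂.IsLeaf x} := hx
  rw [hf.setOf_isLeaf_eq_image hri.2 hcover] at hx'
  obtain ⟨v, hv, rfl⟩ := hx'
  exact (hpath hv).mp (h v hv)

theorem cost_eq_mul_add_cost (hr : H₂.parent (f H₁.root) = H₂.root)
    (hri : H₂.IsInternal (f H₁.root)) (hcover : ∀ x, x ≠ H₂.root → ∃ v, f v = x)
    {n : Fin N} (hn : H₂.label (f H₁.root) = n)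
    (c₀ : ℚ) (L K : Fin N → ℕ) :
    H₂.cost c₀ L K = K n * c₀ + H₁.cost ((K n / L n : ℚ) * c₀) L K := by
  subst hn
  have hinternals : H₂.internals = insert (f H₁.root) (H₁.internals.image f) := by
    ext x
    simp only [Finset.mem_insert, Finset.mem_image, mem_internals]
    refine ⟨fun hx => ?_, ?_⟩
    · obtain ⟨v, rfl⟩ := hcover x hx.1
      by_cases hv : v = H₁.root
      · exact Or.inl (hv ▸ rfl)
      · exact Or.inr ⟨v, (hf.isInternal_map_iff hv).mp hx, rfl⟩
    · rintro (rfl | ⟨v, hv, rfl⟩)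
      exacts [hri, (hf.isInternal_map_iff hv.1).mpr hv]
  rw [cost, hinternals, Finset.sum_insert fun h => ?_, hf.sum_image_internals, hr, H₂.out_root,
    H₂.out_of_ne_root _ _ _ hri.1, hr, H₂.out_root]
  obtain ⟨v, hv, he⟩ := Finset.mem_image.mp h
  exact (H₁.mem_internals.mp hv).1 (hf.injective he)

theorem partialValid_leafLabels (hr : f H₁.root = H₂.root) {P Q : Finset (Fin N)}
    (hPQ : Disjoint P Q) (h : PartialValid P Q H₂) : PartialValid P H₁.leafLabels H₁ := by
  rw [partialValid_iff hPQ] at h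
  have hsub : H₁.leafLabels ⊆ Q := fun m hm => by
    obtain ⟨v, hv, rfl⟩ := (Set.ext_iff.mp H₁.coe_leafLabels m).mp hm
    rw [← hf.label_map v hv.1]
    exact h.1.mapsTo ((hf.isLeaf_map_iff hv.1).mpr hv)
  rw [partialValid_iff (hPQ.mono_right hsub), coe_leafLabels]
  refine ⟨Set.InjOn.bijOn_image fun v hv w hw he => hf.injective (h.1.injOn
    ((hf.isLeaf_map_iff hv.1).mpr hv) ((hf.isLeaf_map_iff hw.1).mpr hw) ?_), fun v hv => ?_⟩
  · rwa [hf.label_map v hv.1, hf.label_map w hw.1]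
  · rw [← hf.bijOn_internalAncestors_iff hr, ← hf.label_map v hv.1]
    exact h.2 _ ((hf.isLeaf_map_iff hv.1).mpr hv)

end IsEmbedding

variable {f₁ : H₁.V → H.V} {f₂ : H₂.V → H.V}

theorem setOf_isLeaf_eq_union (hf₁ : IsEmbedding f₁) (hf₂ : IsEmbedding f₂)
    (hr₁ : f₁ H₁.root = H.root) (hr₂ : f₂ H₂.root = H.root)
    (hcover : ∀ x, x ≠ H.root → (∃ v, f₁ v = x) ∨ ∃ v, f₂ v = x) :
    {x | H.IsLeaf x} = f₁ '' {v | H₁.IsLeaf v} ∪ f₂ '' {v | H₂.IsLeaf v} := by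
  ext x
  refine ⟨fun hx => ?_, ?_⟩
  · rcases hcover x hx.1 with ⟨v, rfl⟩ | ⟨v, rfl⟩
    · have hv : v ≠ H₁.root := fun h => hx.1 (h ▸ hr₁)
      exact Or.inl ⟨v, (hf₁.isLeaf_map_iff hv).mp hx, rfl⟩
    · have hv : v ≠ H₂.root := fun h => hx.1 (h ▸ hr₂)
      exact Or.inr ⟨v, (hf₂.isLeaf_map_iff hv).mp hx, rfl⟩
  · rintro (⟨v, hv, rfl⟩ | ⟨v, hv, rfl⟩)
    exacts [(hf₁.isLeaf_map_iff hv.1).mpr hv, (hf₂.isLeaf_map_iff hv.1).mpr hv]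

theorem partialValid_union (hf₁ : IsEmbedding f₁) (hf₂ : IsEmbedding f₂)
    (hr₁ : f₁ H₁.root = H.root) (hr₂ : f₂ H₂.root = H.root)
    (hcover : ∀ x, x ≠ H.root → (∃ v, f₁ v = x) ∨ ∃ v, f₂ v = x) {P Q₁ Q₂ : Finset (Fin N)}
    (hPQ₁ : Disjoint P Q₁) (hPQ₂ : Disjoint P Q₂) (hQ : Disjoint Q₁ Q₂)
    (h₁ : PartialValid P Q₁ H₁) (h₂ : PartialValid P Q₂ H₂) : PartialValid P (Q₁ ∪ Q₂) H := by
  rw [partialValid_iff hPQ₁] at h₁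
  rw [partialValid_iff hPQ₂] at h₂
  rw [partialValid_iff (Finset.disjoint_union_right.mpr ⟨hPQ₁, hPQ₂⟩)]
  have hleaves := setOf_isLeaf_eq_union hf₁ hf₂ hr₁ hr₂ hcover
  refine ⟨?_, fun x hx => ?_⟩
  · rw [hleaves, Finset.coe_union]
    exact Set.BijOn.union_of_disjoint ((hf₁.bijOn_label_image_iff fun h => h.1 rfl).mpr h₁.1)
      ((hf₂.bijOn_label_image_iff fun h => h.1 rfl).mpr h₂.1) (Finset.disjoint_coe.mpr hQ)
  · have hx' : x ∈ {x | H.IsLeaf x} := hx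
    rcases hleaves ▸ hx' with ⟨v, hv, rfl⟩ | ⟨v, hv, rfl⟩
    · rw [hf₁.bijOn_internalAncestors_iff hr₁, hf₁.label_map v hv.1]
      exact h₁.2 v hv
    · rw [hf₂.bijOn_internalAncestors_iff hr₂, hf₂.label_map v hv.1]
      exact h₂.2 v hv

theorem cost_eq_cost_add_cost (hf₁ : IsEmbedding f₁) (hf₂ : IsEmbedding f₂)
    (hr₁ : f₁ H₁.root = H.root) (hr₂ : f₂ H₂.root = H.root)
    (hcover : ∀ x, x ≠ H.root → (∃ v, f₁ v = x) ∨ ∃ v, f₂ v = x)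
    (hdisj : ∀ u v, u ≠ H₁.root → f₁ u ≠ f₂ v) (c₀ : ℚ) (L K : Fin N → ℕ) :
    H.cost c₀ L K = H₁.cost c₀ L K + H₂.cost c₀ L K := by
  have hinternals : H.internals = H₁.internals.image f₁ ∪ H₂.internals.image f₂ := by
    ext x
    simp only [Finset.mem_union, Finset.mem_image, mem_internals]
    refine ⟨fun hx => ?_, ?_⟩
    · rcases hcover x hx.1 with ⟨v, rfl⟩ | ⟨v, rfl⟩
      · have hv : v ≠ H₁.root := fun h => hx.1 (h ▸ hr₁)
        exact Or.inl ⟨v, (hf₁.isInternal_map_iff hv).mp hx, rfl⟩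
      · have hv : v ≠ H₂.root := fun h => hx.1 (h ▸ hr₂)
        exact Or.inr ⟨v, (hf₂.isInternal_map_iff hv).mp hx, rfl⟩
    · rintro (⟨v, hv, rfl⟩ | ⟨v, hv, rfl⟩)
      exacts [(hf₁.isInternal_map_iff hv.1).mpr hv, (hf₂.isInternal_map_iff hv.1).mpr hv]
  have hdisj' : Disjoint (H₁.internals.image f₁) (H₂.internals.image f₂) := by
    simp only [Finset.disjoint_left, Finset.mem_image, mem_internals]
    rintro _ ⟨u, hu, rfl⟩ ⟨v, -, he⟩
    exact hdisj u v hu.1 he.symm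
  rw [cost, hinternals, Finset.sum_union hdisj', hf₁.sum_image_internals,
    hf₂.sum_image_internals, hr₁, hr₂, H.out_root]

end Embedding

section Constructions

variable (H : TTMTree N)

noncomputable def restrict (r : H.V) (p : H.V → Prop) (hr : p r)
    (hpar : ∀ v, p v → v ≠ r → p (H.parent v)) (hanc : ∀ v, p v → H.IsAncestor r v) :
    TTMTree N where
  V := {v // p v}
  fintypeV := Fintype.ofFinite _
  decEqV := inferInstance
  root := ⟨r, hr⟩
  parent v := if h : v.1 = r then ⟨r, hr⟩ else ⟨H.parent v, hpar v v.2 h⟩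
  parent_root := dif_pos rfl
  reaches_root := exists_iterate_eq_of_rank_lt _ _ (fun v => H.depth v.1) fun v hv => by
    have hvr : v.1 ≠ r := fun h => hv (Subtype.ext h)
    have hv0 : v.1 ≠ H.root := fun h =>
      hvr (h.trans (H.eq_root_of_isAncestor_root (h ▸ hanc v v.2)).symm)
    have := H.depth_parent hv0
    simp only [dif_neg hvr]
    omega
  label v := H.label v

theorem isEmbedding_restrict {r : H.V} {p : H.V → Prop} {hr : p r}
    {hpar : ∀ v, p v → v ≠ r → p (H.parent v)} {hanc : ∀ v, p v → H.IsAncestor r v}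
    (hchild : ∀ v u, p v → v ≠ r → H.parent u = v → p u) :
    IsEmbedding (H₁ := H.restrict r p hr hpar hanc) Subtype.val where
  injective := Subtype.val_injective
  parent_map v hv := by
    dsimp only [restrict]
    split
    · exact absurd (Subtype.ext ‹_›) hv
    · rfl
  label_map _ _ := rfl
  exists_of_parent_eq v x hv hx := ⟨⟨x, hchild v.1 x v.2 (fun h => hv (Subtype.ext h)) hx⟩, rfl⟩

noncomputable def subtree (c : H.V) : TTMTree N :=
  H.restrict c (H.IsAncestor c) (H.isAncestor_refl c) (fun _ h hne => h.isAncestor_parent hne.symm)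
    fun _ h => h

theorem isEmbedding_subtree (c : H.V) : IsEmbedding (H₁ := H.subtree c) Subtype.val :=
  H.isEmbedding_restrict fun _ u hv _ hu => hv.trans (hu ▸ H.isAncestor_parent u)

/-- `H₂` with its root identified with the node `x` of `H₁`. -/
def graft (H₁ : TTMTree N) (x : H₁.V) (H₂ : TTMTree N) : TTMTree N where
  V := H₁.V ⊕ {w : H₂.V // w ≠ H₂.root}
  fintypeV := inferInstance
  decEqV := inferInstance
  root := .inl H₁.root
  parent := Sum.elim (fun v => .inl (H₁.parent v)) fun w =>
    if h : H₂.parent w = H₂.root then .inl x else .inr ⟨_, h⟩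
  parent_root := congrArg Sum.inl H₁.parent_root
  reaches_root := exists_iterate_eq_of_rank_lt _ _
    (Sum.elim H₁.depth fun w => H₂.depth w + H₁.depth x) fun y hy => by
      rcases y with v | ⟨w, hw⟩
      · have hv : v ≠ H₁.root := fun h => hy (h ▸ rfl)
        have := H₁.depth_parent hv
        simp only [Sum.elim_inl]
        omega
      · have := H₂.depth_parent hw
        by_cases h : H₂.parent w = H₂.root
        · simp only [Sum.elim_inr, dif_pos h, Sum.elim_inl]
          omega
        · simp only [Sum.elim_inr, dif_neg h]
          omega
  label := Sum.elim H₁.label fun w => H₂.label w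

end Constructions

def graftMap (H₁ : TTMTree N) (x : H₁.V) (H₂ : TTMTree N) (w : H₂.V) : (H₁.graft x H₂).V :=
  if h : w = H₂.root then .inl x else .inr ⟨w, h⟩

theorem graftMap_root (H₁ : TTMTree N) (x : H₁.V) (H₂ : TTMTree N) :
    H₁.graftMap x H₂ H₂.root = .inl x :=
  dif_pos rfl

theorem graftMap_of_ne_root (H₁ : TTMTree N) (x : H₁.V) {H₂ : TTMTree N} {w : H₂.V}
    (hw : w ≠ H₂.root) : H₁.graftMap x H₂ w = .inr ⟨w, hw⟩ :=
  dif_neg hw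

theorem graft_parent_inr (H₁ : TTMTree N) (x : H₁.V) {H₂ : TTMTree N} {w : H₂.V}
    (hw : w ≠ H₂.root) : (H₁.graft x H₂).parent (.inr ⟨w, hw⟩) = H₁.graftMap x H₂ (H₂.parent w) :=
  rfl

theorem isEmbedding_graftMap (H₁ : TTMTree N) (x : H₁.V) (H₂ : TTMTree N) :
    IsEmbedding (H₁.graftMap x H₂) where
  injective w w' h := by
    by_cases hw : w = H₂.root <;> by_cases hw' : w' = H₂.root
    · exact hw.trans hw'.symm
    · rw [hw, graftMap_root, graftMap_of_ne_root _ _ hw'] at h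
      exact (Sum.inl_ne_inr h).elim
    · rw [hw', graftMap_root, graftMap_of_ne_root _ _ hw] at h
      exact (Sum.inr_ne_inl h).elim
    · rw [graftMap_of_ne_root _ _ hw, graftMap_of_ne_root _ _ hw'] at h
      exact congrArg Subtype.val (Sum.inr_injective h)
  parent_map w hw := by rw [graftMap_of_ne_root _ _ hw, graft_parent_inr]
  label_map w hw := by rw [graftMap_of_ne_root _ _ hw]; rfl
  exists_of_parent_eq w y hw hy := by
    rw [graftMap_of_ne_root _ _ hw] at hy
    rcases y with v | ⟨u, hu⟩
    · exact (Sum.inl_ne_inr hy).elim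
    · exact ⟨u, (graftMap_of_ne_root _ _ hu)⟩

theorem isEmbedding_graft_inl (H₁ H₂ : TTMTree N) :
    IsEmbedding (H₂ := H₁.graft H₁.root H₂) Sum.inl where
  injective := Sum.inl_injective
  parent_map _ _ := rfl
  label_map _ _ := rfl
  exists_of_parent_eq v y hv hy := by
    rcases y with u | ⟨u, hu⟩
    · exact ⟨u, rfl⟩
    · rw [graft_parent_inr] at hy
      by_cases h : H₂.parent u = H₂.root
      · rw [h, graftMap_root] at hy
        exact (hv (Sum.inl_injective hy).symm).elim
      · rw [graftMap_of_ne_root _ _ h] at hy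
        exact (Sum.inr_ne_inl hy).elim

abbrev edge (n : Fin N) : TTMTree N where
  V := Bool
  fintypeV := inferInstance
  decEqV := inferInstance
  root := false
  parent _ := false
  parent_root := rfl
  reaches_root _ := ⟨1, rfl⟩
  label _ := n

theorem edge_isLeaf_true (n : Fin N) : (edge n).IsLeaf true :=
  ⟨Bool.noConfusion, fun _ _ h => Bool.noConfusion h⟩

theorem edge_internalAncestors_true (n : Fin N) : (edge n).internalAncestors true = ∅ := by
  refine Set.eq_empty_of_forall_notMem fun u ⟨_, hu⟩ => ?_
  cases u
  exacts [hu.1 rfl, hu.2 (edge_isLeaf_true n)]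

theorem edge_isLeaf_iff (n : Fin N) {v : (edge n).V} : (edge n).IsLeaf v ↔ v = true := by
  refine ⟨fun h => ?_, fun h => h ▸ edge_isLeaf_true n⟩
  cases v
  exacts [(h.1 rfl).elim, rfl]

theorem partialValid_edge {P : Finset (Fin N)} {n : Fin N} (hn : n ∉ P)
    (huniv : insert n P = Finset.univ) :
    PartialValid P {n} (edge n) := by
  rw [partialValid_iff (Finset.disjoint_singleton_right.mpr hn)]
  have hleaves : {v | (edge n).IsLeaf v} = {true} := Set.ext fun _ => edge_isLeaf_iff n
  refine ⟨by rw [hleaves, Finset.coe_singleton]; exact Set.bijOn_singleton.mpr rfl, fun v hv => ?_⟩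
  rw [(edge_isLeaf_iff n).mp hv, edge_internalAncestors_true, Set.bijOn_empty_iff_right]
  have : insert ((edge n).label true) (P : Set (Fin N)) = Set.univ := by
    rw [← Finset.coe_insert, huniv, Finset.coe_univ]
  rw [this, Set.compl_univ]

theorem cost_edge (n : Fin N) (c₀ : ℚ) (L K : Fin N → ℕ) : (edge n).cost c₀ L K = 0 := by
  refine Finset.sum_eq_zero fun v hv => ?_
  obtain ⟨hvr, hvl⟩ := (edge n).mem_internals.mp hv
  cases v
  exacts [(hvr rfl).elim, (hvl (edge_isLeaf_true n)).elim]

section GraftEdge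

variable (n : Fin N) {H : TTMTree N} (hH : ∃ v, v ≠ H.root)

theorem graft_edge_parent : ((edge n).graft true H).parent ((edge n).graftMap true H H.root) =
    ((edge n).graft true H).root := by
  rw [graftMap_root]
  rfl

include hH in
theorem graft_edge_isInternal :
    ((edge n).graft true H).IsInternal ((edge n).graftMap true H H.root) := by
  obtain ⟨v, hv⟩ := hH
  obtain ⟨c, hc, hcr, -⟩ := H.exists_parent_eq_root_isAncestor hv
  rw [graftMap_root]
  refine ⟨fun h => Bool.noConfusion (Sum.inl_injective h), fun ⟨_, hleaf⟩ => hleaf (.inr ⟨c, hcr⟩)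
    (Sum.inr_ne_inl) ?_⟩
  rw [graft_parent_inr, hc, graftMap_root]

theorem graft_edge_cover (x : ((edge n).graft true H).V) (hx : x ≠ ((edge n).graft true H).root) :
    ∃ w, (edge n).graftMap true H w = x := by
  rcases x with (_ | _) | ⟨w, hw⟩
  · exact (hx rfl).elim
  · exact ⟨H.root, graftMap_root _ _ _⟩
  · exact ⟨w, graftMap_of_ne_root _ _ hw⟩

theorem graft_edge_label : ((edge n).graft true H).label ((edge n).graftMap true H H.root) = n := by
  rw [graftMap_root]
  rfl

include hH in
theorem partialValid_graft_edge {P Q : Finset (Fin N)} (hnP : n ∉ P)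
    (hPQ : Disjoint (insert n P) Q) (h : PartialValid (insert n P) Q H) :
    PartialValid P Q ((edge n).graft true H) :=
  ((isEmbedding_graftMap _ _ H).partialValid_insert_iff (graft_edge_parent n)
    (graft_edge_isInternal n hH) (graft_edge_cover n) (graft_edge_label n) hnP hPQ).mp h

include hH in
theorem cost_graft_edge (c₀ : ℚ) (L K : Fin N → ℕ) :
    ((edge n).graft true H).cost c₀ L K = K n * c₀ + H.cost ((K n / L n : ℚ) * c₀) L K :=
  (isEmbedding_graftMap _ _ H).cost_eq_mul_add_cost (graft_edge_parent n)
    (graft_edge_isInternal n hH) (graft_edge_cover n) (graft_edge_label n) c₀ L K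

end GraftEdge

section GraftRoot

variable (H₁ H₂ : TTMTree N)

theorem graft_root_cover (x : (H₁.graft H₁.root H₂).V) (hx : x ≠ (H₁.graft H₁.root H₂).root) :
    (∃ v, Sum.inl v = x) ∨ ∃ w, H₁.graftMap H₁.root H₂ w = x := by
  rcases x with v | ⟨w, hw⟩
  · exact Or.inl ⟨v, rfl⟩
  · exact Or.inr ⟨w, graftMap_of_ne_root _ _ hw⟩

theorem partialValid_graft_root {P Q₁ Q₂ : Finset (Fin N)} (hPQ₁ : Disjoint P Q₁)
    (hPQ₂ : Disjoint P Q₂) (hQ : Disjoint Q₁ Q₂) (h₁ : PartialValid P Q₁ H₁)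
    (h₂ : PartialValid P Q₂ H₂) : PartialValid P (Q₁ ∪ Q₂) (H₁.graft H₁.root H₂) :=
  partialValid_union (isEmbedding_graft_inl H₁ H₂) (isEmbedding_graftMap _ _ H₂) rfl
    (graftMap_root _ _ _) (graft_root_cover H₁ H₂) hPQ₁ hPQ₂ hQ h₁ h₂

theorem cost_graft_root (c₀ : ℚ) (L K : Fin N → ℕ) :
    (H₁.graft H₁.root H₂).cost c₀ L K = H₁.cost c₀ L K + H₂.cost c₀ L K := by
  refine cost_eq_cost_add_cost (isEmbedding_graft_inl H₁ H₂) (isEmbedding_graftMap _ _ H₂) rfl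
    (graftMap_root _ _ _) (graft_root_cover H₁ H₂) (fun u w hu h => ?_) c₀ L K
  by_cases hw : w = H₂.root
  · rw [hw, graftMap_root] at h
    exact hu (Sum.inl_injective h)
  · rw [graftMap_of_ne_root _ _ hw] at h
    exact Sum.inl_ne_inr h

end GraftRoot

section Decomposition

variable {H : TTMTree N}

section Subtree

variable {c : H.V} (hc : H.parent c = H.root) (hci : H.IsInternal c)
  (honly : ∀ u, u ≠ H.root → H.parent u = H.root → u = c)

include honly in
theorem subtree_cover (x : H.V) (hx : x ≠ H.root) : ∃ v : (H.subtree c).V, v.1 = x := by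
  obtain ⟨c', hc', hc'r, hanc⟩ := H.exists_parent_eq_root_isAncestor hx
  exact ⟨⟨x, honly c' hc'r hc' ▸ hanc⟩, rfl⟩

include hc hci honly in
theorem partialValid_subtree {P Q : Finset (Fin N)} (hcP : H.label c ∉ P)
    (hPQ : Disjoint (insert (H.label c) P) Q) (h : PartialValid P Q H) :
    PartialValid (insert (H.label c) P) Q (H.subtree c) :=
  ((H.isEmbedding_subtree c).partialValid_insert_iff hc hci (subtree_cover honly) rfl hcP
    hPQ).mpr h

include hc hci honly in
theorem cost_eq_add_cost_subtree (c₀ : ℚ) (L K : Fin N → ℕ) :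
    H.cost c₀ L K = K (H.label c) * c₀ +
      (H.subtree c).cost ((K (H.label c) / L (H.label c) : ℚ) * c₀) L K :=
  (H.isEmbedding_subtree c).cost_eq_mul_add_cost hc hci (subtree_cover honly) rfl c₀ L K

end Subtree

section Branch

variable {c : H.V} (hc : H.parent c = H.root) (hcr : c ≠ H.root)

noncomputable def branch : TTMTree N :=
  H.restrict H.root (fun v => v = H.root ∨ H.IsAncestor c v) (Or.inl rfl)
    (fun v hv hvr => by
      obtain hv | hv := hv
      · exact (hvr hv).elim
      · by_cases hvc : c = v
        · exact Or.inl (hvc ▸ hc)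
        · exact Or.inr (hv.isAncestor_parent hvc))
    fun v _ => H.isAncestor_root v

noncomputable def branchCompl : TTMTree N :=
  H.restrict H.root (fun v => ¬ H.IsAncestor c v)
    (fun h => hcr (H.eq_root_of_isAncestor_root h))
    (fun _ hv _ h => hv (h.trans (H.isAncestor_parent _))) fun v _ => H.isAncestor_root v

theorem isEmbedding_branch : IsEmbedding (H₁ := branch hc) Subtype.val :=
  H.isEmbedding_restrict fun v u hv hvr hu => Or.inr <| by
    obtain hv | hv := hv
    · exact (hvr hv).elim
    · exact hv.trans (hu ▸ H.isAncestor_parent u)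

include hc in
theorem isEmbedding_branchCompl : IsEmbedding (H₁ := branchCompl hcr) Subtype.val :=
  H.isEmbedding_restrict fun v u hv hvr hu h => by
    by_cases huc : c = u
    · exact hvr (hu ▸ huc ▸ hc)
    · exact hv (hu ▸ h.isAncestor_parent huc)

theorem branch_cover (x : H.V) :
    (∃ v : (branch hc).V, v.1 = x) ∨ ∃ v : (branchCompl hcr).V, v.1 = x := by
  by_cases h : H.IsAncestor c x
  exacts [Or.inl ⟨⟨x, Or.inr h⟩, rfl⟩, Or.inr ⟨⟨x, h⟩, rfl⟩]

theorem cost_eq_cost_branch_add (c₀ : ℚ) (L K : Fin N → ℕ) :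
    H.cost c₀ L K = (branch hc).cost c₀ L K + (branchCompl hcr).cost c₀ L K :=
  cost_eq_cost_add_cost (isEmbedding_branch hc) (isEmbedding_branchCompl hc hcr) rfl rfl
    (fun x _ => branch_cover hc hcr x)
    (fun u v hu he => v.2 (he ▸ u.2.resolve_left fun h => hu (Subtype.ext h)))
    c₀ L K

theorem leafLabels_branch_union :
    (branch hc).leafLabels ∪ (branchCompl hcr).leafLabels = H.leafLabels := by
  refine Finset.coe_injective ?_
  rw [Finset.coe_union, coe_leafLabels, coe_leafLabels, coe_leafLabels,
    setOf_isLeaf_eq_union (isEmbedding_branch hc) (isEmbedding_branchCompl hc hcr) rfl rfl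
      fun x _ => branch_cover hc hcr x, Set.image_union]
  congr 1 <;> exact (Set.image_image H.label Subtype.val _).symm

theorem disjoint_leafLabels_branch (hinj : Set.InjOn H.label {v | H.IsLeaf v}) :
    Disjoint (branch hc).leafLabels (branchCompl hcr).leafLabels := by
  refine Finset.disjoint_left.mpr fun m hm₁ hm₂ => ?_
  obtain ⟨v₁, hv₁, rfl⟩ := (branch hc).mem_leafLabels.mp hm₁
  obtain ⟨v₂, hv₂, he⟩ := (branchCompl hcr).mem_leafLabels.mp hm₂
  have hv₁r : v₁.1 ≠ H.root := fun h => hv₁.1 (Subtype.ext h)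
  have heq : v₂.1 = v₁.1 := hinj ((isEmbedding_branchCompl hc hcr).isLeaf_map_iff hv₂.1 |>.mpr hv₂)
    ((isEmbedding_branch hc).isLeaf_map_iff hv₁.1 |>.mpr hv₁) he
  exact v₂.2 (heq ▸ v₁.2.resolve_left hv₁r)

include hcr in
theorem leafLabels_branch_nonempty : (branch hc).leafLabels.Nonempty := by
  obtain ⟨w, hw, hcw⟩ := H.exists_isLeaf_of_isAncestor hcr
  have hwr : (⟨w, Or.inr hcw⟩ : (branch hc).V) ≠ (branch hc).root := fun h =>
    hw.1 (congrArg Subtype.val h)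
  exact ⟨_, (branch hc).mem_leafLabels.mpr
    ⟨_, ((isEmbedding_branch hc).isLeaf_map_iff hwr).mp hw, rfl⟩⟩

include hc in
theorem leafLabels_branchCompl_nonempty {c' : H.V} (hc' : H.parent c' = H.root)
    (hc'r : c' ≠ H.root) (hne : c' ≠ c) : (branchCompl hcr).leafLabels.Nonempty := by
  obtain ⟨w, hw, hcw⟩ := H.exists_isLeaf_of_isAncestor hc'r
  have hnot : ¬ H.IsAncestor c w := fun h => hne (H.eq_of_isAncestor_of_depth_eq hcw h
    ((H.depth_eq_one hc' hc'r).trans (H.depth_eq_one hc hcr).symm))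
  have hwr : (⟨w, hnot⟩ : (branchCompl hcr).V) ≠ (branchCompl hcr).root := fun h =>
    hw.1 (congrArg Subtype.val h)
  exact ⟨_, (branchCompl hcr).mem_leafLabels.mpr
    ⟨_, ((isEmbedding_branchCompl hc hcr).isLeaf_map_iff hwr).mp hw, rfl⟩⟩

end Branch

variable {P Q R : Finset (Fin N)}

theorem _root_.PartialValid.card_eq_one_and_eq_empty (hPQ : Disjoint P Q) (hPR : Disjoint P R)
    (hQR : Disjoint Q R) (h : PartialValid P Q H) {c : H.V} (hc : H.parent c = H.root)
    (hcl : H.IsLeaf c) : Q.card = 1 ∧ R = ∅ := by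
  obtain ⟨hleaves, hpaths⟩ := (partialValid_iff hPQ H).mp h
  have hempty : H.internalAncestors c = ∅ := Set.eq_empty_of_forall_notMem fun u hu =>
    hu.2.2 ((H.internalAncestors_subset_of_parent_eq_root hc hu : u = c) ▸ hcl)
  have hcover (m : Fin N) (hmP : m ∉ P) : m = H.label c := by
    have := hpaths c hcl
    rw [hempty, Set.bijOn_empty_iff_right, Set.compl_empty_iff] at this
    simpa [hmP] using Set.eq_univ_iff_forall.mp this m
  have hcQ : H.label c ∈ Q := hleaves.mapsTo hcl
  refine ⟨Finset.card_eq_one.mpr ⟨_, Finset.eq_singleton_iff_unique_mem.mpr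
    ⟨hcQ, fun m hm => hcover m (Finset.disjoint_right.mp hPQ hm)⟩⟩,
    Finset.eq_empty_of_forall_notMem fun m hm => ?_⟩
  exact Finset.disjoint_right.mp hQR hm (hcover m (Finset.disjoint_right.mp hPR hm) ▸ hcQ)

theorem _root_.PartialValid.label_mem_of_unique_child (hPQ : Disjoint P Q)
    (hcover : P ∪ Q ∪ R = Finset.univ) (h : PartialValid P Q H) {c : H.V} (hci : H.IsInternal c)
    (honly : ∀ u, u ≠ H.root → H.parent u = H.root → u = c) : H.label c ∈ R := by
  have hcP := h.label_notMem hci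
  have hcQ : H.label c ∉ Q := fun hq => by
    obtain ⟨hleaves, hpaths⟩ := (partialValid_iff hPQ H).mp h
    obtain ⟨w, hw, hwc⟩ := hleaves.surjOn hq
    obtain ⟨v, rfl⟩ := subtree_cover honly w hw.1
    have := (hpaths v.1 hw).mapsTo ⟨v.2, hci⟩
    simp [hwc] at this
  have := hcover ▸ Finset.mem_univ (H.label c)
  simpa [hcP, hcQ] using this

theorem _root_.PartialValid.exists_reuse_or_split (hPQ : Disjoint P Q) (hPR : Disjoint P R)
    (hQR : Disjoint Q R) (hcover : P ∪ Q ∪ R = Finset.univ) (hQ : Q.Nonempty)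
    (hcase : ¬(Q.card = 1 ∧ R = ∅)) (h : PartialValid P Q H) :
    (∃ n ∈ R, ∃ H' : TTMTree N, PartialValid (insert n P) Q H' ∧
      ∀ c₀ L K, H.cost c₀ L K = K n * c₀ + H'.cost ((K n / L n : ℚ) * c₀) L K) ∨
    ∃ Q₁ Q₂ : Finset (Fin N), Q₁ ∪ Q₂ = Q ∧ Disjoint Q₁ Q₂ ∧ Q₁.Nonempty ∧ Q₂.Nonempty ∧
      ∃ H₁ H₂ : TTMTree N, PartialValid P Q₁ H₁ ∧ PartialValid P Q₂ H₂ ∧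
        ∀ c₀ L K, H.cost c₀ L K = H₁.cost c₀ L K + H₂.cost c₀ L K := by
  obtain ⟨w, hw⟩ := h.exists_isLeaf hQ
  obtain ⟨c, hc, hcr, -⟩ := H.exists_parent_eq_root_isAncestor hw.1
  by_cases honly : ∀ u, u ≠ H.root → H.parent u = H.root → u = c
  · by_cases hcl : H.IsLeaf c
    · exact (hcase (h.card_eq_one_and_eq_empty hPQ hPR hQR hc hcl)).elim
    have hci : H.IsInternal c := ⟨hcr, hcl⟩
    have hcR := h.label_mem_of_unique_child hPQ hcover hci honly
    refine Or.inl ⟨_, hcR, _, partialValid_subtree hc hci honly (h.label_notMem hci)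
      (Finset.disjoint_insert_left.mpr ⟨Finset.disjoint_right.mp hQR hcR, hPQ⟩) h,
      cost_eq_add_cost_subtree hc hci honly⟩
  · push Not at honly
    obtain ⟨c', hc'r, hc', hne⟩ := honly
    exact Or.inr ⟨_, _, (leafLabels_branch_union hc hcr).trans (h.leafLabels_eq hPQ),
      disjoint_leafLabels_branch hc hcr ((partialValid_iff hPQ H).mp h).1.injOn,
      leafLabels_branch_nonempty hc hcr,
      leafLabels_branchCompl_nonempty hc hcr hc' hc'r hne, _, _,
      (isEmbedding_branch hc).partialValid_leafLabels rfl hPQ h,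
      (isEmbedding_branchCompl hc hcr).partialValid_leafLabels rfl hPQ h,
      cost_eq_cost_branch_add hc hcr⟩

end Decomposition

end TTMTree

theorem rootCard_insert {N : ℕ} (L K : Fin N → ℕ) {P : Finset (Fin N)} {n : Fin N}
    (hn : n ∉ P) (hL : (L n : ℚ) ≠ 0) :
    rootCard L K (insert n P) = (K n / L n : ℚ) * rootCard L K P := by
  rw [rootCard, rootCard, Finset.prod_insert hn, Finset.compl_insert,
    ← Finset.mul_prod_erase Pᶜ (fun m => (L m : ℚ)) (Finset.mem_compl.mpr hn)]
  field_simp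

theorem pcost_nonneg {N : ℕ} (L K : Fin N → ℕ) (P : Finset (Fin N)) (H : TTMTree N) :
    0 ≤ pcost L K P H :=
  H.cost_nonneg (by unfold rootCard; positivity) L K

theorem pcost_eq_add_pcost_insert {N : ℕ} {L K : Fin N → ℕ} {P : Finset (Fin N)} {n : Fin N}
    (hn : n ∉ P) (hL : (L n : ℚ) ≠ 0) {H H' : TTMTree N}
    (hcost : ∀ c₀, H.cost c₀ L K = K n * c₀ + H'.cost ((K n / L n : ℚ) * c₀) L K) :
    pcost L K P H = K n * rootCard L K P + pcost L K (insert n P) H' := by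
  rw [pcost, hcost, pcost, rootCard_insert L K hn hL]

section Opt

open TTMTree

variable {N : ℕ} {L K : Fin N → ℕ} {opt : Finset (Fin N) → Finset (Fin N) → Finset (Fin N) → ℚ}
  (hopt : ∀ P' Q' R' : Finset (Fin N), Disjoint P' Q' → Q'.Nonempty →
    IsLeast {c : ℚ | ∃ H : TTMTree N, PartialValid P' Q' H ∧ pcost L K P' H = c} (opt P' Q' R'))
  {P Q R : Finset (Fin N)}
include hopt

theorem opt_eq_zero {n : Fin N} (hn : n ∉ P) (huniv : insert n P = Finset.univ) :
    opt P {n} R = 0 := by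
  have hPQ := Finset.disjoint_singleton_right.mpr hn
  obtain ⟨⟨H, -, hH⟩, hle⟩ := hopt P {n} R hPQ (Finset.singleton_nonempty n)
  exact le_antisymm (hle ⟨_, partialValid_edge hn huniv, cost_edge n _ L K⟩)
    (hH ▸ pcost_nonneg L K P H)

theorem opt_le_reuse {n : Fin N} (hnP : n ∉ P) (hPQ : Disjoint (insert n P) Q)
    (hL : (L n : ℚ) ≠ 0) (hQ : Q.Nonempty) (R' : Finset (Fin N)) :
    opt P Q R ≤ K n * rootCard L K P + opt (insert n P) Q R' := by
  obtain ⟨⟨H, hH, hcost⟩, -⟩ := hopt (insert n P) Q R' hPQ hQ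
  obtain ⟨w, hw⟩ := hH.exists_isLeaf hQ
  refine (hopt P Q R (hPQ.mono_left (Finset.subset_insert n P)) hQ).2
    ⟨_, partialValid_graft_edge n ⟨w, hw.1⟩ hnP hPQ hH, ?_⟩
  rw [← hcost]
  exact pcost_eq_add_pcost_insert hnP hL fun c₀ => cost_graft_edge n ⟨w, hw.1⟩ c₀ L K

theorem opt_le_split {Q₁ Q₂ : Finset (Fin N)} (hPQ : Disjoint P (Q₁ ∪ Q₂))
    (hQ : Disjoint Q₁ Q₂) (hQ₁ : Q₁.Nonempty) (hQ₂ : Q₂.Nonempty) :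
    opt P (Q₁ ∪ Q₂) R ≤ opt P Q₁ R + opt P Q₂ R := by
  obtain ⟨hPQ₁, hPQ₂⟩ := Finset.disjoint_union_right.mp hPQ
  obtain ⟨⟨H₁, hH₁, hcost₁⟩, -⟩ := hopt P Q₁ R hPQ₁ hQ₁
  obtain ⟨⟨H₂, hH₂, hcost₂⟩, -⟩ := hopt P Q₂ R hPQ₂ hQ₂
  refine (hopt P _ R hPQ (hQ₁.mono Finset.subset_union_left)).2
    ⟨_, partialValid_graft_root H₁ H₂ hPQ₁ hPQ₂ hQ hH₁ hH₂, ?_⟩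
  rw [pcost, cost_graft_root, ← pcost, ← pcost, hcost₁, hcost₂]

theorem exists_option_le_opt (hL : ∀ n, (L n : ℚ) ≠ 0) (hPQ : Disjoint P Q)
    (hPR : Disjoint P R) (hQR : Disjoint Q R) (hcover : P ∪ Q ∪ R = Finset.univ)
    (hQ : Q.Nonempty) (hcase : ¬(Q.card = 1 ∧ R = ∅)) :
    (∃ n ∈ R, K n * rootCard L K P + opt (insert n P) Q (R.erase n) ≤ opt P Q R) ∨
    ∃ Q₁ Q₂ : Finset (Fin N), Q₁ ∪ Q₂ = Q ∧ Disjoint Q₁ Q₂ ∧ Q₁.Nonempty ∧ Q₂.Nonempty ∧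
      opt P Q₁ R + opt P Q₂ R ≤ opt P Q R := by
  obtain ⟨⟨H, hH, hcost⟩, -⟩ := hopt P Q R hPQ hQ
  rcases hH.exists_reuse_or_split hPQ hPR hQR hcover hQ hcase with
    ⟨n, hnR, H', hH', hcost'⟩ | ⟨Q₁, Q₂, rfl, hdisj, hQ₁, hQ₂, H₁, H₂, hH₁, hH₂, hcost'⟩
  · have hnP := Finset.disjoint_right.mp hPR hnR
    have hPQ' := Finset.disjoint_insert_left.mpr ⟨Finset.disjoint_right.mp hQR hnR, hPQ⟩
    refine Or.inl ⟨n, hnR, ?_⟩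
    rw [← hcost, pcost_eq_add_pcost_insert hnP (hL n) (hcost' · L K)]
    exact add_le_add le_rfl ((hopt _ Q _ hPQ' hQ).2 ⟨H', hH', rfl⟩)
  · have hPQ₁ := Finset.disjoint_union_right.mp hPQ
    refine Or.inr ⟨Q₁, Q₂, rfl, hdisj, hQ₁, hQ₂, ?_⟩
    rw [← hcost, pcost, hcost', ← pcost, ← pcost]
    exact add_le_add ((hopt P Q₁ R hPQ₁.1 hQ₁).2 ⟨H₁, hH₁, rfl⟩)
      ((hopt P Q₂ R hPQ₁.2 hQ₂).2 ⟨H₂, hH₂, rfl⟩)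

end Opt

theorem opt_partial_recurrence_general {N : ℕ} (L K : Fin N → ℕ)
    (hK : ∀ n, 1 ≤ K n) (hKL : ∀ n, K n ≤ L n)
    (opt : Finset (Fin N) → Finset (Fin N) → Finset (Fin N) → ℚ)
    (hopt : ∀ P' Q' R' : Finset (Fin N), Disjoint P' Q' → Q'.Nonempty →
      IsLeast {c : ℚ | ∃ H : TTMTree N, PartialValid P' Q' H ∧
        pcost L K P' H = c} (opt P' Q' R'))
    (P Q R : Finset (Fin N))
    (hPQ : Disjoint P Q) (hPR : Disjoint P R) (hQR : Disjoint Q R)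
    (hcover : P ∪ Q ∪ R = Finset.univ) (hQ : 1 ≤ Q.card) :
    (Q.card = 1 ∧ R = ∅ → opt P Q R = 0) ∧
    (¬(Q.card = 1 ∧ R = ∅) →
      IsLeast
        ({x : ℚ | ∃ n ∈ R,
            x = (K n : ℚ) * rootCard L K P + opt (insert n P) Q (R.erase n)} ∪
         {x : ℚ | ∃ Q₁ Q₂ : Finset (Fin N), Q₁ ∪ Q₂ = Q ∧ Disjoint Q₁ Q₂ ∧
            Q₁.Nonempty ∧ Q₂.Nonempty ∧ x = opt P Q₁ R + opt P Q₂ R})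
        (opt P Q R)) := by
  have hQne : Q.Nonempty := Finset.card_pos.mp hQ
  have hL (n : Fin N) : (L n : ℚ) ≠ 0 :=
    Nat.cast_ne_zero.mpr (Nat.pos_iff_ne_zero.mp ((hK n).trans (hKL n)))
  have hreuse {n} (hnR : n ∈ R) := opt_le_reuse hopt (R := R) (Finset.disjoint_right.mp hPR hnR)
    (Finset.disjoint_insert_left.mpr ⟨Finset.disjoint_right.mp hQR hnR, hPQ⟩) (hL n) hQne
    (R.erase n)
  refine ⟨fun ⟨hQ1, hR⟩ => ?_, fun hcase => ⟨?_, ?_⟩⟩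
  · obtain ⟨n, rfl⟩ := Finset.card_eq_one.mp hQ1
    refine opt_eq_zero hopt (Finset.disjoint_singleton_right.mp hPQ) ?_
    rw [hR, Finset.union_empty, Finset.union_comm, ← Finset.insert_eq] at hcover
    exact hcover
  · rcases exists_option_le_opt hopt hL hPQ hPR hQR hcover hQne hcase with
      ⟨n, hnR, hle⟩ | ⟨Q₁, Q₂, rfl, hdisj, hQ₁, hQ₂, hle⟩
    · exact Or.inl ⟨n, hnR, le_antisymm (hreuse hnR) hle⟩
    · exact Or.inr ⟨Q₁, Q₂, rfl, hdisj, hQ₁, hQ₂,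
        le_antisymm (opt_le_split hopt hPQ hdisj hQ₁ hQ₂) hle⟩
  · rintro x (⟨n, hnR, rfl⟩ | ⟨Q₁, Q₂, rfl, hdisj, hQ₁, hQ₂, rfl⟩)
    · exact hreuse hnR
    · exact opt_le_split hopt hPQ hdisj hQ₁ hQ₂

/-- **The recurrence satisfied by the optimal partial TTM-tree cost.**
Let `opt` assign to every admissible triple `(P', Q', R')` the minimum cost of
a partial TTM-tree for it (hypothesis `hopt`, stated as an `IsLeast`).  Let
`(P, Q, R)` be pairwise disjoint with `P ∪ Q ∪ R = {1, …, N}` and `|Q| ≥ 1`.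
Then: (a) if `|Q| = 1` and `R = ∅` then `opt P Q R = 0`; (b) otherwise
`opt P Q R` is the minimum of the set of available options, consisting of the
reuse options `K n · |T[P]| + opt (P ∪ {n}) Q (R \ {n})` for `n ∈ R`, and the
split options `opt P Q₁ R + opt P Q₂ R` for partitions `Q = Q₁ ⊎ Q₂` with
`Q₁, Q₂ ≠ ∅`. -/
theorem opt_partial_recurrence {N : ℕ} (hN : 2 ≤ N) (L K : Fin N → ℕ)
    (hK : ∀ n, 1 ≤ K n) (hKL : ∀ n, K n ≤ L n)
    (opt : Finset (Fin N) → Finset (Fin N) → Finset (Fin N) → ℚ)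
    (hopt : ∀ P' Q' R' : Finset (Fin N), Disjoint P' Q' → Q'.Nonempty →
      IsLeast {c : ℚ | ∃ H : TTMTree N, PartialValid P' Q' H ∧
        pcost L K P' H = c} (opt P' Q' R'))
    (P Q R : Finset (Fin N))
    (hPQ : Disjoint P Q) (hPR : Disjoint P R) (hQR : Disjoint Q R)
    (hcover : P ∪ Q ∪ R = Finset.univ) (hQ : 1 ≤ Q.card) :
    (Q.card = 1 ∧ R = ∅ → opt P Q R = 0) ∧
    (¬(Q.card = 1 ∧ R = ∅) →
      IsLeast
        ({x : ℚ | ∃ n ∈ R,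
            x = (K n : ℚ) * rootCard L K P + opt (insert n P) Q (R.erase n)} ∪
         {x : ℚ | ∃ Q₁ Q₂ : Finset (Fin N), Q₁ ∪ Q₂ = Q ∧ Disjoint Q₁ Q₂ ∧
            Q₁.Nonempty ∧ Q₂.Nonempty ∧ x = opt P Q₁ R + opt P Q₂ R})
        (opt P Q R)) :=
  opt_partial_recurrence_general L K hK hKL opt hopt P Q R hPQ hPR hQR hcover hQ
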